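/- arXiv:2401.08550 — 3 statements merged into one kernel-verified Lean document; each statement's English description precedes it below -/
import Mathlib

section
/- (Circulant antiferromagnetic embedding) Let n ≥ 4 be an even integer and let C be the n × n adjacency matrix of the n-node cycle graph: C_{jk} = 1 if j − k ≡ ±1 (mod n) and C_{jk} = 0 otherwise. Define the (n/2)-qubit operator Q_C = Σ_{j=1}^{n/2} X_j. Then for all k, ℓ ∈ {1,…,n}, ⟨f_k| Q_C |f_ℓ⟩ = C_{kℓ}, where |f_j⟩ is the circulant antiferromagnetic codeword basis state. -/
open Matrix

/-- The single-qubit Pauli `X` matrix `[[0,1],[1,0]]`, with basis indexed by `Bool`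
(`false = |0⟩`, `true = |1⟩`). -/
def pauliX : Matrix Bool Bool ℂ := fun s t => if s = t then 0 else 1

/-- The single-qubit Pauli `Y` matrix `[[0,-i],[i,0]]`. -/
def pauliY : Matrix Bool Bool ℂ :=
  fun s t => if s = t then 0 else if s then Complex.I else -Complex.I

/-- The single-qubit Pauli `Z` matrix `[[1,0],[0,-1]]`. -/
def pauliZ : Matrix Bool Bool ℂ := fun s t => if s = t then (if s then -1 else 1) else 0

/-- The single-qubit number operator `n̂ = (I - Z)/2`. -/
noncomputable def numOp : Matrix Bool Bool ℂ := (2⁻¹ : ℂ) • (1 - pauliZ)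

/-- The `m`-fold tensor (Kronecker) product `f 0 ⊗ f 1 ⊗ ⋯ ⊗ f (m-1)` of single-qubit
operators, as a matrix on `(ℂ²)^{⊗ m}` whose computational basis is indexed by bitstrings
`Fin m → Bool`. -/
def tensorOp {m : ℕ} (f : Fin m → Matrix Bool Bool ℂ) :
    Matrix (Fin m → Bool) (Fin m → Bool) ℂ :=
  fun s t => ∏ i, f i (s i) (t i)

/-- The single-qubit operator `M` acting on qubit `j` (0-indexed), tensored with the identity
on all other qubits. -/
def siteOp {m : ℕ} (M : Matrix Bool Bool ℂ) (j : Fin m) :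
    Matrix (Fin m → Bool) (Fin m → Bool) ℂ :=
  tensorOp fun i => if i = j then M else 1

/-- The computational basis vector labeled by the bitstring `w`. -/
def basisVec {m : ℕ} (w : Fin m → Bool) : (Fin m → Bool) → ℂ := fun s => if s = w then 1 else 0
/-- The adjacency matrix of the `n`-node cycle graph: `C j k = 1` iff `j - k ≡ ±1 (mod n)`. -/
def cycleAdj (n : ℕ) : Matrix (Fin n) (Fin n) ℂ :=
  fun j k => if ((j : ℕ) + 1) % n = (k : ℕ) ∨ ((k : ℕ) + 1) % n = (j : ℕ) then 1 else 0

/-- The circulant antiferromagnetic codeword `f_j` on `n/2` qubits: `f_1` is the alternating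
string (bit `i`, 1-indexed, equals 0 for odd `i` and 1 for even `i`); for `j = 2, …, n/2`,
`f_j` is obtained from `f_{j-1}` by flipping bit `j-1`; and for `j = n/2+1, …, n`, `f_j` is
the bitwise negation of `f_{j-n/2}`. Here `j : Fin n` represents the 1-indexed integer `j+1`. -/
def circAntiferroWord (n : ℕ) (j : Fin n) : Fin (n / 2) → Bool :=
  fun i =>
    if (j : ℕ) < n / 2 then xor (decide ((i : ℕ) < (j : ℕ))) (decide ((i : ℕ) % 2 = 1))
    else !(xor (decide ((i : ℕ) < (j : ℕ) - n / 2)) (decide ((i : ℕ) % 2 = 1)))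

/-- The `(n/2)`-qubit operator `Q_C = Σ_{j=1}^{n/2} X_j`. -/
noncomputable def circQ (n : ℕ) : Matrix (Fin (n / 2) → Bool) (Fin (n / 2) → Bool) ℂ :=
  ∑ j : Fin (n / 2), siteOp pauliX j

lemma siteOp_pauliX_apply {m : ℕ} (j : Fin m) (s t : Fin m → Bool) :
    siteOp pauliX j s t =
      if (Finset.univ.filter fun i => s i ≠ t i) = {j} then 1 else 0 := by
  unfold siteOp tensorOp
  have h : ∀ i : Fin m, (if i = j then pauliX else 1) (s i) (t i)
      = if ((s i ≠ t i) ↔ i = j) then (1:ℂ) else 0 := by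
    intro i
    by_cases hij : i = j <;> by_cases hst : s i = t i <;>
      simp [hij, hst, pauliX, Matrix.one_apply]
  simp only [h]
  rw [Finset.prod_boole]
  congr 1
  simp only [eq_iff_iff]
  constructor
  · intro hall
    ext i
    simp only [Finset.mem_filter, Finset.mem_univ, true_and, Finset.mem_singleton]
    exact hall i (Finset.mem_univ i)
  · intro hset i _
    have := Finset.ext_iff.mp hset i
    simpa using this

lemma sum_siteOp_apply {m : ℕ} (s t : Fin m → Bool) :
    (∑ j : Fin m, siteOp pauliX j) s t =
      if (Finset.univ.filter fun i => s i ≠ t i).card = 1 then 1 else 0 := by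
  rw [Matrix.sum_apply]
  simp only [siteOp_pauliX_apply]
  by_cases h : (Finset.univ.filter fun i => s i ≠ t i).card = 1
  · obtain ⟨a, ha⟩ := Finset.card_eq_one.mp h
    rw [if_pos h, ha]
    simp [Finset.singleton_inj]
  · rw [if_neg h]
    apply Finset.sum_eq_zero
    intro j _
    rw [if_neg]
    intro hD
    exact h (by rw [hD]; simp)

lemma bxor_ne (x y p : Bool) : (xor x p ≠ xor y p) ↔ x ≠ y := by revert x y p; decide
lemma bnotxor_ne (x y p : Bool) : ((!(xor x p)) ≠ (!(xor y p))) ↔ x ≠ y := by revert x y p; decide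
lemma bxor_ne_not (x y p : Bool) : (xor x p ≠ !(xor y p)) ↔ x = y := by revert x y p; decide

lemma card_filter_ico (m a b : ℕ) (hb : b ≤ m) :
    (Finset.univ.filter fun i : Fin m => a ≤ (i:ℕ) ∧ (i:ℕ) < b).card = b - a := by
  have he : (Finset.univ.filter fun i : Fin m => a ≤ (i:ℕ) ∧ (i:ℕ) < b)
      = (Finset.Ico a b).attachFin (fun x hx => lt_of_lt_of_le (Finset.mem_Ico.mp hx).2 hb) := by
    ext i
    simp [Finset.mem_attachFin, Finset.mem_Ico]
  rw [he, Finset.card_attachFin, Nat.card_Ico]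

lemma mod_succ (x n : ℕ) (h : x < n) : (x+1) % n = if x + 1 = n then 0 else x + 1 := by
  split
  · simp [*]
  · exact Nat.mod_eq_of_lt (by omega)

lemma hamming (n : ℕ) (hn : 4 ≤ n) (heven : Even n) (k l : Fin n) (hkl : (k:ℕ) ≤ (l:ℕ)) :
    ((Finset.univ.filter fun i =>
        circAntiferroWord n k i ≠ circAntiferroWord n l i).card = 1
      ↔ (((k:ℕ)+1) % n = (l:ℕ) ∨ ((l:ℕ)+1) % n = (k:ℕ))) := by
  obtain ⟨m, hm⟩ := heven
  have hkn : (k:ℕ) < n := k.isLt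
  have hln : (l:ℕ) < n := l.isLt
  rw [mod_succ _ _ hkn, mod_succ _ _ hln]
  by_cases hk : (k:ℕ) < n / 2
  · by_cases hl : (l:ℕ) < n / 2
    · -- Case A
      have hD : (Finset.univ.filter fun i =>
          circAntiferroWord n k i ≠ circAntiferroWord n l i).card = (l:ℕ) - (k:ℕ) := by
        rw [Finset.filter_congr (q := fun i : Fin (n/2) => (k:ℕ) ≤ (i:ℕ) ∧ (i:ℕ) < (l:ℕ))
          (fun i _ => by
            simp only [circAntiferroWord]
            rw [if_pos hk, if_pos hl]
            rw [bxor_ne]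
            simp only [ne_eq, decide_eq_decide]
            omega)]
        exact card_filter_ico _ _ _ (by omega)
      rw [hD]
      split_ifs <;> omega
    · -- Case C
      by_cases hac : (k:ℕ) ≤ (l:ℕ) - n/2
      · have hD : (Finset.univ.filter fun i =>
            circAntiferroWord n k i ≠ circAntiferroWord n l i).card
            = n/2 - (((l:ℕ) - n/2) - (k:ℕ)) := by
          have hsum := Finset.card_filter_add_card_filter_not
            (s := (Finset.univ : Finset (Fin (n/2))))
            (fun i => circAntiferroWord n k i ≠ circAntiferroWord n l i)
          have hneg : (Finset.univ.filter fun i : Fin (n/2) =>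
              ¬ (circAntiferroWord n k i ≠ circAntiferroWord n l i)).card
              = ((l:ℕ) - n/2) - (k:ℕ) := by
            rw [Finset.filter_congr (q := fun i : Fin (n/2) =>
                (k:ℕ) ≤ (i:ℕ) ∧ (i:ℕ) < (l:ℕ) - n/2)
              (fun i _ => by
                simp only [circAntiferroWord]
                rw [if_pos hk, if_neg hl]
                rw [not_ne_iff]
                rw [show ∀ x y : Bool, (x = y) ↔ ¬ (x ≠ y) from fun x y => by simp]
                rw [bxor_ne_not]
                simp only [ne_eq, decide_eq_decide, not_not]
                omega)]
            exact card_filter_ico _ _ _ (by omega)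
          have hcard : (Finset.univ : Finset (Fin (n/2))).card = n/2 := by simp
          omega
        rw [hD]
        split_ifs <;> omega
      · have hD : (Finset.univ.filter fun i =>
            circAntiferroWord n k i ≠ circAntiferroWord n l i).card
            = n/2 - ((k:ℕ) - ((l:ℕ) - n/2)) := by
          have hsum := Finset.card_filter_add_card_filter_not
            (s := (Finset.univ : Finset (Fin (n/2))))
            (fun i => circAntiferroWord n k i ≠ circAntiferroWord n l i)
          have hneg : (Finset.univ.filter fun i : Fin (n/2) =>
              ¬ (circAntiferroWord n k i ≠ circAntiferroWord n l i)).card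
              = (k:ℕ) - ((l:ℕ) - n/2) := by
            rw [Finset.filter_congr (q := fun i : Fin (n/2) =>
                (l:ℕ) - n/2 ≤ (i:ℕ) ∧ (i:ℕ) < (k:ℕ))
              (fun i _ => by
                simp only [circAntiferroWord]
                rw [if_pos hk, if_neg hl]
                rw [not_ne_iff]
                rw [show ∀ x y : Bool, (x = y) ↔ ¬ (x ≠ y) from fun x y => by simp]
                rw [bxor_ne_not]
                simp only [ne_eq, decide_eq_decide, not_not]
                omega)]
            exact card_filter_ico _ _ _ (by omega)
          have hcard : (Finset.univ : Finset (Fin (n/2))).card = n/2 := by simp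
          omega
        rw [hD]
        split_ifs <;> omega
  · -- Case B
    have hl : ¬ ((l:ℕ) < n / 2) := by omega
    have hD : (Finset.univ.filter fun i =>
        circAntiferroWord n k i ≠ circAntiferroWord n l i).card
        = ((l:ℕ) - n/2) - ((k:ℕ) - n/2) := by
      rw [Finset.filter_congr (q := fun i : Fin (n/2) =>
          (k:ℕ) - n/2 ≤ (i:ℕ) ∧ (i:ℕ) < (l:ℕ) - n/2)
        (fun i _ => by
          simp only [circAntiferroWord]
          rw [if_neg hk, if_neg hl]
          rw [bnotxor_ne]
          simp only [ne_eq, decide_eq_decide]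
          omega)]
      exact card_filter_ico _ _ _ (by omega)
    rw [hD]
    split_ifs <;> omega

/-- **Circulant antiferromagnetic embedding.** For even `n ≥ 4`, the matrix elements of
`Q_C = Σ_j X_j` between circulant antiferromagnetic codeword states reproduce the adjacency
matrix of the `n`-node cycle graph: `⟨f_k| Q_C |f_ℓ⟩ = C_{k ℓ}` for all `k, ℓ`. -/
theorem circulant_antiferro_embedding_matrix_elements (n : ℕ) (hn : 4 ≤ n) (heven : Even n) :
    ∀ k l : Fin n,
      circQ n (circAntiferroWord n k) (circAntiferroWord n l) = cycleAdj n k l := by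
  intro k l
  show (∑ j : Fin (n / 2), siteOp pauliX j) _ _ = _
  rw [sum_siteOp_apply]
  have key : (Finset.univ.filter fun i =>
      circAntiferroWord n k i ≠ circAntiferroWord n l i).card = 1
      ↔ (((k:ℕ)+1) % n = (l:ℕ) ∨ ((l:ℕ)+1) % n = (k:ℕ)) := by
    rcases le_total (k:ℕ) (l:ℕ) with h | h
    · exact hamming n hn heven k l h
    · have h2 := hamming n hn heven l k h
      rw [Finset.filter_congr (q := fun i : Fin (n/2) =>
        circAntiferroWord n l i ≠ circAntiferroWord n k i) (fun i _ => ne_comm), h2]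
      exact or_comm
  show _ = if ((k:ℕ) + 1) % n = (l:ℕ) ∨ ((l:ℕ) + 1) % n = (k:ℕ) then (1:ℂ) else 0
  exact if_congr key rfl rfl
end

section
/- (Penalty-free one-hot embedding) Let n ≥ 2 and let A be an n × n complex Hermitian matrix, with diagonal entries α_j = A_{jj} for j = 1,…,n and off-diagonal entries A_{jk} = α_{j,k} + i β_{j,k} (α_{j,k}, β_{j,k} real) for 1 ≤ j < k ≤ n. Define the n-qubit operator H^{ebd}_A = Σ_{j=1}^{n} α_j n̂_j + (1/2) Σ_{1 ≤ j < k ≤ n} [α_{j,k}(X_k ⊗ X_j + Y_k ⊗ Y_j) + β_{j,k}(X_k ⊗ Y_j − Y_k ⊗ X_j)], with two-qubit Pauli terms acting on qubits j and k and identity elsewhere. Let S = span{|h_1⟩,…,|h_n⟩} with orthogonal projection P_S. Then: (i) for all ℓ, m ∈ {1,…,n}, ⟨h_ℓ| H^{ebd}_A |h_m⟩ = A_{ℓm}; and (ii) S is an invariant subspace of H^{ebd}_A, i.e., (I − P_S) H^{ebd}_A P_S = 0. -/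
open Matrix

/-- The one-hot codeword `h_j` on `n` qubits: exactly bit `j` is `1` (0-indexed `j : Fin n`,
representing the 1-indexed integer `j+1`). -/
def oneHotWord (n : ℕ) (j : Fin n) : Fin n → Bool := fun i => decide (i = j)

/-- The two-qubit operator acting as `M` on qubit `k` and `N` on qubit `j`, with identity on
all other qubits. -/
def twoSiteOp {q : ℕ} (M N : Matrix Bool Bool ℂ) (k j : Fin q) :
    Matrix (Fin q → Bool) (Fin q → Bool) ℂ :=
  tensorOp fun i => if i = k then M else if i = j then N else 1

/-- The `n`-qubit operator of the penalty-free one-hot embedding: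
`H = Σ_j α_j n̂_j + (1/2) Σ_{1 ≤ j < k ≤ n}
  [α_{j,k} (X_k ⊗ X_j + Y_k ⊗ Y_j) + β_{j,k} (X_k ⊗ Y_j - Y_k ⊗ X_j)]`. -/
noncomputable def oneHotPenaltyFree {n : ℕ} (A : Matrix (Fin n) (Fin n) ℂ) :
    Matrix (Fin n → Bool) (Fin n → Bool) ℂ :=
  (∑ j : Fin n, A j j • siteOp numOp j) +
    (2⁻¹ : ℂ) •
      ∑ l : Fin n, ∑ m : Fin n,
        if l < m then
          ((A l m).re : ℂ) • (twoSiteOp pauliX pauliX m l + twoSiteOp pauliY pauliY m l) +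
            ((A l m).im : ℂ) • (twoSiteOp pauliX pauliY m l - twoSiteOp pauliY pauliX m l)
        else 0

/-- The orthogonal projection onto `S = span{|h_1⟩, …, |h_n⟩}`, the span of the one-hot
codeword states. -/
def oneHotProj (n : ℕ) : Matrix (Fin n → Bool) (Fin n → Bool) ℂ :=
  fun s t => if s = t ∧ ∃ j : Fin n, s = oneHotWord n j then 1 else 0

lemma numOp_apply (a b : Bool) : numOp a b = if a = true ∧ b = true then 1 else 0 := by
  rcases a <;> rcases b <;>
    simp [numOp, pauliZ, Matrix.smul_apply, Matrix.sub_apply, Matrix.one_apply] <;> norm_num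

lemma prod_delta {q : ℕ} (s t : Fin q → Bool) (E : Finset (Fin q)) :
    (∏ i ∈ E, (1 : Matrix Bool Bool ℂ) (s i) (t i)) =
      if ∀ i ∈ E, s i = t i then 1 else 0 := by
  split_ifs with h
  · exact Finset.prod_eq_one fun i hi => by simp [Matrix.one_apply, h i hi]
  · push_neg at h
    obtain ⟨i, hi, hne⟩ := h
    exact Finset.prod_eq_zero hi (by simp [Matrix.one_apply, hne])

lemma siteOp_numOp_apply {q : ℕ} (j : Fin q) (s t : Fin q → Bool) :
    siteOp numOp j s t = if s = t ∧ s j = true then 1 else 0 := by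
  unfold siteOp tensorOp
  rw [← Finset.mul_prod_erase _ _ (Finset.mem_univ j)]
  beta_reduce
  rw [if_pos rfl]
  rw [Finset.prod_congr rfl (fun i hi => by rw [if_neg (Finset.ne_of_mem_erase hi)]),
    prod_delta, numOp_apply]
  by_cases hall : ∀ i ∈ Finset.univ.erase j, s i = t i
  · rw [if_pos hall, mul_one]
    by_cases hj : s j = t j
    · have hst : s = t := funext fun i => by
        by_cases hij : i = j
        · subst hij; exact hj
        · exact hall i (Finset.mem_erase.mpr ⟨hij, Finset.mem_univ i⟩)
      subst hst
      simp
    · have hst : ¬ (s = t ∧ s j = true) := by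
        rintro ⟨rfl, -⟩; exact hj rfl
      rw [if_neg hst]
      rcases hs : s j <;> rcases htj : t j <;> simp_all
  · rw [if_neg hall, mul_zero, if_neg]
    push_neg at hall
    obtain ⟨i, hi, hne⟩ := hall
    rintro ⟨rfl, -⟩; exact hne rfl

lemma twoSiteOp_apply {q : ℕ} (M N : Matrix Bool Bool ℂ) (k j : Fin q) (hkj : k ≠ j)
    (s t : Fin q → Bool) :
    twoSiteOp M N k j s t =
      M (s k) (t k) * N (s j) (t j) *
        if ∀ i, ¬(i = j) → ¬(i = k) → s i = t i then 1 else 0 := by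
  unfold twoSiteOp tensorOp
  rw [← Finset.mul_prod_erase _ _ (Finset.mem_univ k)]
  beta_reduce
  rw [if_pos rfl]
  rw [← Finset.mul_prod_erase _ _ (Finset.mem_erase.mpr ⟨Ne.symm hkj, Finset.mem_univ j⟩)]
  beta_reduce
  rw [if_neg (Ne.symm hkj), if_pos rfl, ← mul_assoc]
  congr 1
  rw [Finset.prod_congr rfl (fun i hi => ?_), prod_delta]
  · congr 1
    simp only [Finset.mem_erase, Finset.mem_univ, and_true, eq_iff_iff]
    constructor
    · intro h i hj hk; exact h i ⟨hj, hk⟩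
    · intro h i ⟨hj, hk⟩; exact h i hj hk
  · simp only [Finset.mem_erase, Finset.mem_univ, and_true] at hi
    rw [if_neg hi.2, if_neg hi.1]

lemma oneHotWord_apply {n : ℕ} (j i : Fin n) : oneHotWord n j i = decide (i = j) := rfl

lemma pair_entry {n : ℕ} (A : Matrix (Fin n) (Fin n) ℂ) (hA : A.IsHermitian)
    (l m' m : Fin n) (hlt : l < m') (s : Fin n → Bool) :
    (((A l m').re : ℂ) • (twoSiteOp pauliX pauliX m' l + twoSiteOp pauliY pauliY m' l) +
        ((A l m').im : ℂ) • (twoSiteOp pauliX pauliY m' l - twoSiteOp pauliY pauliX m' l))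
        s (oneHotWord n m) =
      (if m' = m ∧ s = oneHotWord n l then 2 * A l m else 0) +
        (if l = m ∧ s = oneHotWord n m' then 2 * A m' m else 0) := by
  have hne : m' ≠ l := hlt.ne'
  set t := oneHotWord n m with ht
  simp only [Matrix.add_apply, Matrix.sub_apply, Matrix.smul_apply, smul_eq_mul,
    twoSiteOp_apply _ _ _ _ hne]
  set D : ℂ := if ∀ i, ¬(i = l) → ¬(i = m') → s i = t i then 1 else 0 with hD
  by_cases h1 : m' = m
  · subst h1
    have htm : t m' = true := by simp [ht, oneHotWord_apply]
    have htl : t l = false := by simp [ht, oneHotWord_apply, hlt.ne]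
    have hsecond : (if l = m' ∧ s = oneHotWord n m' then 2 * A m' m' else 0) = 0 :=
      if_neg (by rintro ⟨h, -⟩; exact hlt.ne h)
    rw [hsecond, add_zero]
    by_cases hs : s = oneHotWord n l
    · rw [if_pos ⟨rfl, hs⟩]
      have hsl : s l = true := by simp [hs, oneHotWord_apply]
      have hsm : s m' = false := by simp [hs, oneHotWord_apply, hne]
      have hDone : D = 1 := by
        rw [hD, if_pos]
        intro i hil him
        simp [hs, oneHotWord_apply, hil, him, ht]
      rw [hsl, hsm, htm, htl, hDone]
      simp only [pauliX, pauliY]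
      norm_num [Complex.I_sq]
      linear_combination (2 : ℂ) * Complex.re_add_im (A l m')
    · rw [if_neg (by rintro ⟨-, h⟩; exact hs h)]
      by_cases hDc : ∀ i, ¬(i = l) → ¬(i = m') → s i = t i
      · rcases hsl : s l <;> rcases hsm : s m'
        · rw [htm, htl]
          simp [pauliX, pauliY]
        · rw [htm, htl]
          simp [pauliX, pauliY]
        · exfalso; apply hs; funext i
          by_cases hil : i = l
          · simp [hil, oneHotWord_apply, hsl]
          · by_cases him : i = m'
            · simp [him, oneHotWord_apply, hsm, hne]
            · rw [hDc i hil him, ht, oneHotWord_apply, oneHotWord_apply,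
                decide_eq_decide]
              constructor
              · intro h; exact absurd h him
              · intro h; exact absurd h hil
        · rw [htm, htl]
          simp [pauliX, pauliY]
      · have hDzero : D = 0 := if_neg hDc
        rw [hDzero]; ring
  · have htm : t m' = false := by simp [ht, oneHotWord_apply, h1]
    rw [if_neg (by rintro ⟨h, -⟩; exact h1 h), zero_add]
    by_cases h2 : l = m
    · subst h2
      have htl : t l = true := by simp [ht, oneHotWord_apply]
      have hconj : A m' l = ((A l m').re : ℂ) - ((A l m').im : ℂ) * Complex.I := by
        rw [← hA.apply m' l, Complex.star_def]
        apply Complex.ext <;> simp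
      by_cases hs : s = oneHotWord n m'
      · rw [if_pos ⟨rfl, hs⟩]
        have hsl : s l = false := by simp [hs, oneHotWord_apply, hne.symm]
        have hsm : s m' = true := by simp [hs, oneHotWord_apply]
        have hDone : D = 1 := by
          rw [hD, if_pos]
          intro i hil him
          simp [hs, oneHotWord_apply, hil, him, ht]
        rw [hsl, hsm, htm, htl, hDone]
        simp only [pauliX, pauliY]
        norm_num [Complex.I_sq]
        linear_combination (-2 : ℂ) * hconj
      · rw [if_neg (by rintro ⟨-, h⟩; exact hs h)]
        by_cases hDc : ∀ i, ¬(i = l) → ¬(i = m') → s i = t i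
        · rcases hsl : s l <;> rcases hsm : s m'
          · rw [htm, htl]
            simp [pauliX, pauliY]
          · exfalso; apply hs; funext i
            by_cases him : i = m'
            · simp [him, oneHotWord_apply, hsm]
            · by_cases hil : i = l
              · simp [hil, oneHotWord_apply, hsl, hlt.ne]
              · rw [hDc i hil him, ht, oneHotWord_apply, oneHotWord_apply,
                  decide_eq_decide]
                constructor
                · intro h; exact absurd h hil
                · intro h; exact absurd h him
          · rw [htm, htl]
            simp [pauliX, pauliY]
          · rw [htm, htl]
            simp [pauliX, pauliY]
        · have hDzero : D = 0 := if_neg hDc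
          rw [hDzero]; ring
    · have htl : t l = false := by simp [ht, oneHotWord_apply, h2]
      rw [if_neg (by rintro ⟨h, -⟩; exact h2 h)]
      rcases hsl : s l <;> rcases hsm : s m' <;>
        rw [htm, htl]
      · simp [pauliX, pauliY]
      · simp [pauliX, pauliY]
      · simp [pauliX, pauliY]
      · simp only [pauliX, pauliY]
        norm_num [Complex.I_sq]


lemma column {n : ℕ} (A : Matrix (Fin n) (Fin n) ℂ) (hA : A.IsHermitian)
    (m : Fin n) (s : Fin n → Bool) :
    oneHotPenaltyFree A s (oneHotWord n m) =
      ∑ l, if s = oneHotWord n l then A l m else 0 := by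
  unfold oneHotPenaltyFree
  simp only [Matrix.add_apply, Matrix.smul_apply, Matrix.sum_apply, smul_eq_mul,
    siteOp_numOp_apply]
  have hoff : ∀ l m' : Fin n,
      (if l < m' then
          ((A l m').re : ℂ) • (twoSiteOp pauliX pauliX m' l + twoSiteOp pauliY pauliY m' l) +
            ((A l m').im : ℂ) • (twoSiteOp pauliX pauliY m' l - twoSiteOp pauliY pauliX m' l)
        else 0) s (oneHotWord n m) =
      (if l < m' ∧ m' = m ∧ s = oneHotWord n l then 2 * A l m else 0) +
        (if l < m' ∧ l = m ∧ s = oneHotWord n m' then 2 * A m' m else 0) := by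
    intro l m'
    by_cases h : l < m'
    · rw [if_pos h, pair_entry A hA l m' m h s]
      congr 1
      · split_ifs with h1 h2 h2 <;> first | rfl | (exfalso; tauto)
      · split_ifs with h1 h2 h2 <;> first | rfl | (exfalso; tauto)
    · rw [if_neg h, Matrix.zero_apply, if_neg (by tauto), if_neg (by tauto)]
      ring
  rw [Finset.sum_congr rfl (fun l _ => Finset.sum_congr rfl (fun m' _ => hoff l m'))]
  have hdiag : (∑ j, A j j * (if s = oneHotWord n m ∧ s j = true then 1 else 0)) =
      if s = oneHotWord n m then A m m else 0 := by
    by_cases hs : s = oneHotWord n m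
    · rw [if_pos hs, Finset.sum_eq_single m]
      · rw [if_pos ⟨hs, by simp [hs, oneHotWord_apply]⟩, mul_one]
      · intro j _ hj
        rw [if_neg, mul_zero]
        rintro ⟨-, hj'⟩
        rw [hs, oneHotWord_apply] at hj'
        simp only [decide_eq_true_eq] at hj'
        exact hj hj'
      · intro h; exact absurd (Finset.mem_univ m) h
    · simp [hs]
  rw [hdiag]
  have hsplit : (∑ l : Fin n, ∑ m' : Fin n,
      ((if l < m' ∧ m' = m ∧ s = oneHotWord n l then 2 * A l m else 0) +
        (if l < m' ∧ l = m ∧ s = oneHotWord n m' then 2 * A m' m else 0))) =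
      ∑ l : Fin n, if ¬l = m ∧ s = oneHotWord n l then 2 * A l m else 0 := by
    rw [Finset.sum_congr rfl (fun l _ => Finset.sum_add_distrib), Finset.sum_add_distrib]
    have hS1 : ∀ l : Fin n,
        (∑ m' : Fin n, if l < m' ∧ m' = m ∧ s = oneHotWord n l then 2 * A l m else 0) =
        if l < m ∧ s = oneHotWord n l then 2 * A l m else 0 := by
      intro l
      rw [Finset.sum_eq_single m]
      · split_ifs with h1 h2 h2 <;> first | rfl | (exfalso; tauto)
      · intro b _ hb; rw [if_neg]; rintro ⟨-, h, -⟩; exact hb h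
      · intro h; exact absurd (Finset.mem_univ m) h
    have hS2 : (∑ l : Fin n, ∑ m' : Fin n,
        if l < m' ∧ l = m ∧ s = oneHotWord n m' then 2 * A m' m else 0) =
        ∑ l : Fin n, if m < l ∧ s = oneHotWord n l then 2 * A l m else 0 := by
      rw [Finset.sum_eq_single m]
      · apply Finset.sum_congr rfl
        intro m' _
        split_ifs with h1 h2 h2 <;> first | rfl | (exfalso; tauto)
      · intro b _ hb
        apply Finset.sum_eq_zero
        intro m' _
        rw [if_neg]; rintro ⟨-, h, -⟩; exact hb h
      · intro h; exact absurd (Finset.mem_univ m) h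
    rw [Finset.sum_congr rfl (fun l _ => hS1 l), hS2, ← Finset.sum_add_distrib]
    apply Finset.sum_congr rfl
    intro l _
    rcases lt_trichotomy l m with h | h | h
    · simp [h, h.ne, lt_asymm h]
    · simp [h]
    · simp [h, h.ne', lt_asymm h]
  rw [hsplit, Finset.mul_sum]
  have hdiag2 : (∑ l : Fin n, if l = m ∧ s = oneHotWord n l then A l m else 0) =
      if s = oneHotWord n m then A m m else 0 := by
    rw [Finset.sum_eq_single m]
    · split_ifs with h1 h2 h2 <;> first | rfl | (exfalso; tauto)
    · intro b _ hb; rw [if_neg]; rintro ⟨h, -⟩; exact hb h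
    · intro h; exact absurd (Finset.mem_univ m) h
  rw [← hdiag2,
    Finset.sum_congr rfl (fun l _ =>
      show (2⁻¹ : ℂ) * (if ¬l = m ∧ s = oneHotWord n l then 2 * A l m else 0) =
        if ¬l = m ∧ s = oneHotWord n l then A l m else 0 by split_ifs <;> ring),
    ← Finset.sum_add_distrib]
  apply Finset.sum_congr rfl
  intro l _
  by_cases hl : l = m <;> by_cases hs : s = oneHotWord n l <;> simp [hl, hs]

lemma oneHotWord_injective {n : ℕ} {a b : Fin n} (h : oneHotWord n a = oneHotWord n b) :
    a = b := by
  have := congrFun h a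
  simpa [oneHotWord_apply] using this


/-- **Penalty-free one-hot embedding.** For an `n × n` Hermitian matrix `A` (`n ≥ 2`):
(i) the matrix elements of `H^{ebd}_A` between one-hot codeword states reproduce `A`, and
(ii) the one-hot code subspace `S` is invariant under `H^{ebd}_A`, i.e.
`(I - P_S) H^{ebd}_A P_S = 0`. -/
theorem oneHot_penalty_free_embedding (n : ℕ) (hn : 2 ≤ n)
    (A : Matrix (Fin n) (Fin n) ℂ) (hA : A.IsHermitian) :
    (∀ l m : Fin n,
        oneHotPenaltyFree A (oneHotWord n l) (oneHotWord n m) = A l m) ∧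
      (1 - oneHotProj n) * oneHotPenaltyFree A * oneHotProj n = 0 := by
  constructor
  · intro l m
    rw [column A hA m (oneHotWord n l), Finset.sum_eq_single l]
    · rw [if_pos rfl]
    · intro b _ hb
      rw [if_neg]
      intro h
      exact hb (oneHotWord_injective h).symm
    · intro h; exact absurd (Finset.mem_univ l) h
  · have hleft : ∀ s v : Fin n → Bool,
        ((1 - oneHotProj n) * oneHotPenaltyFree A) s v =
          (if ∃ j, s = oneHotWord n j then 0 else 1) * oneHotPenaltyFree A s v := by
      intro s v
      rw [Matrix.mul_apply, Finset.sum_eq_single s]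
      · congr 1
        simp only [Matrix.sub_apply, Matrix.one_apply, oneHotProj]
        split_ifs <;> simp_all
      · intro w _ hw
        have : (1 - oneHotProj n) s w = 0 := by
          simp only [Matrix.sub_apply, Matrix.one_apply, oneHotProj]
          rw [if_neg (Ne.symm hw), if_neg (by rintro ⟨h, -⟩; exact hw h.symm)]
          ring
        rw [this, zero_mul]
      · intro h; exact absurd (Finset.mem_univ s) h
    ext s u
    simp only [Matrix.zero_apply]
    rw [Matrix.mul_apply]
    apply Finset.sum_eq_zero
    intro v _
    rw [hleft]
    by_cases hc : v = u ∧ ∃ j, v = oneHotWord n j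
    · obtain ⟨rfl, j, rfl⟩ := hc
      by_cases hs : ∃ j', s = oneHotWord n j'
      · rw [if_pos hs, zero_mul, zero_mul]
      · rw [if_neg hs, column A hA j s, Finset.sum_eq_zero, mul_zero, zero_mul]
        intro l _
        exact if_neg (fun h => hs ⟨l, h⟩)
    · rw [show oneHotProj n v u = 0 from if_neg hc, mul_zero]
end

section
/- (Circulant unary penalty Hamiltonian spectrum) Let n ≥ 4 be an even integer and define the (n/2)-qubit operator H^{pen}_{circ-unary} = −Σ_{j=1}^{n/2−1} Z_{j+1} Z_j + Z_{n/2} Z_1. Then every circulant unary codeword state |c_j⟩ (j = 1,…,n) is an eigenvector of H^{pen}_{circ-unary} with eigenvalue −(n/2 − 2); this is the least eigenvalue; the eigenspace for eigenvalue −(n/2 − 2) is exactly span{|c_1⟩,…,|c_n⟩}; and every other eigenvalue is at least −(n/2 − 2) + 4 (i.e., the spectral gap between the ground and first excited energy levels equals 4). -/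
open Matrix

/-- The circulant unary codeword `c_j` on `n/2` qubits: for `j : Fin n` representing the
1-indexed integer `j+1`, if `j+1 ≤ n/2` the lowest `j` bits are `1` and the rest are `0`;
for `j+1 > n/2`, `c_{j+1}` is the bitwise negation of `c_{j+1-n/2}`. -/
def circUnaryWord (n : ℕ) (j : Fin n) : Fin (n / 2) → Bool :=
  fun i =>
    if (j : ℕ) < n / 2 then decide ((i : ℕ) < (j : ℕ))
    else !(decide ((i : ℕ) < (j : ℕ) - n / 2))

/-- The circulant unary penalty Hamiltonian
`H^{pen}_{circ-unary} = -Σ_{j=1}^{n/2-1} Z_{j+1} Z_j + Z_{n/2} Z_1` on `n/2` qubits. -/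
noncomputable def circUnaryPen (n : ℕ) (hn : 4 ≤ n) :
    Matrix (Fin (n / 2) → Bool) (Fin (n / 2) → Bool) ℂ :=
  -(∑ j : Fin (n / 2 - 1),
      siteOp pauliZ (⟨(j : ℕ) + 1, by have := j.isLt; omega⟩ : Fin (n / 2)) *
        siteOp pauliZ ⟨(j : ℕ), by have := j.isLt; omega⟩) +
    siteOp pauliZ (⟨n / 2 - 1, by omega⟩ : Fin (n / 2)) *
      siteOp pauliZ (⟨0, by omega⟩ : Fin (n / 2))


/-! ### Auxiliary development -/

/-- The `±1` eigenvalue of `Z` on a bit. -/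
def zsign (b : Bool) : ℤ := if b then -1 else 1

lemma zsign_sq (b : Bool) : zsign b * zsign b = 1 := by cases b <;> simp [zsign]

/-- Extension of a bitstring on `Fin m` to `ℕ`. -/
def tfun {m : ℕ} (s : Fin m → Bool) (i : ℕ) : Bool := if h : i < m then s ⟨i, h⟩ else false

lemma tfun_mk {m : ℕ} (s : Fin m → Bool) (i : ℕ) (h : i < m) : s ⟨i, h⟩ = tfun s i := by
  simp [tfun, h]

lemma tfun_val {m : ℕ} (s : Fin m → Bool) (i : Fin m) : s i = tfun s (i : ℕ) := by
  simp [tfun, i.isLt]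

/-- Diagonal matrix element (energy) of the penalty Hamiltonian on bitstring `s`. -/
def dval (m : ℕ) (s : Fin m → Bool) : ℤ :=
  -(∑ j ∈ Finset.range (m - 1), zsign (tfun s (j+1)) * zsign (tfun s j))
    + zsign (tfun s (m - 1)) * zsign (tfun s 0)

/-- Number of domain walls in the open chain. -/
def flipCount (m : ℕ) (s : Fin m → Bool) : ℕ :=
  ((Finset.range (m - 1)).filter (fun j => tfun s (j+1) ≠ tfun s j)).card

lemma siteOp_pauliZ_eq {m : ℕ} (j : Fin m) :
    siteOp pauliZ j = Matrix.diagonal (fun s : Fin m → Bool => ((zsign (s j) : ℤ) : ℂ)) := by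
  funext s t
  by_cases hst : s = t
  · subst hst
    simp only [Matrix.diagonal_apply_eq, siteOp, tensorOp]
    rw [Finset.prod_eq_single j]
    · cases s j <;> simp [pauliZ, zsign]
    · intro i _ hij
      simp [hij, Matrix.one_apply]
    · simp
  · obtain ⟨i, hi⟩ : ∃ i, s i ≠ t i := by
      by_contra h
      push_neg at h
      exact hst (funext h)
    rw [Matrix.diagonal_apply_ne _ hst]
    simp only [siteOp, tensorOp]
    apply Finset.prod_eq_zero (Finset.mem_univ i)
    by_cases hij : i = j
    · subst hij; simp [pauliZ, hi]
    · simp [hij, Matrix.one_apply, hi]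

lemma diagonal_sum' {ι κ : Type*} [Fintype κ] [DecidableEq ι] (f : κ → ι → ℂ) :
    ∑ j : κ, Matrix.diagonal (f j) = Matrix.diagonal (fun i => ∑ j, f j i) := by
  funext i k
  by_cases h : i = k
  · subst h; simp [Matrix.sum_apply]
  · simp [Matrix.sum_apply, Matrix.diagonal_apply_ne _ h]

lemma pen_eq_diagonal (n : ℕ) (hn : 4 ≤ n) :
    circUnaryPen n hn = Matrix.diagonal (fun s => ((dval (n/2) s : ℤ) : ℂ)) := by
  unfold circUnaryPen
  simp only [siteOp_pauliZ_eq, Matrix.diagonal_mul_diagonal, diagonal_sum',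
    Matrix.diagonal_neg, Matrix.diagonal_add]
  apply congrArg Matrix.diagonal
  funext s
  simp only [tfun_mk]
  have : ((dval (n/2) s : ℤ) : ℂ) =
      -(∑ j ∈ Finset.range (n/2 - 1),
          ((zsign (tfun s (j+1)) : ℤ) : ℂ) * ((zsign (tfun s j) : ℤ) : ℂ))
        + ((zsign (tfun s (n/2 - 1)) : ℤ) : ℂ) * ((zsign (tfun s 0) : ℤ) : ℂ) := by
    unfold dval; push_cast; ring
  rw [this, ← Fin.sum_univ_eq_sum_range
    (fun j => ((zsign (tfun s (j+1)) : ℤ) : ℂ) * ((zsign (tfun s j) : ℤ) : ℂ))]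

lemma telescope {m : ℕ} (s : Fin m → Bool) (N : ℕ) :
    ∏ j ∈ Finset.range N, (zsign (tfun s (j+1)) * zsign (tfun s j))
      = zsign (tfun s N) * zsign (tfun s 0) := by
  induction N with
  | zero => rw [Finset.prod_range_zero, zsign_sq]
  | succ k ih =>
    rw [Finset.prod_range_succ, ih]
    have := zsign_sq (tfun s k)
    ring_nf
    ring_nf at this
    rw [mul_assoc, mul_comm (zsign (tfun s 0)), ← mul_assoc, this, one_mul]

lemma dval_eq (m : ℕ) (hm : 2 ≤ m) (s : Fin m → Bool) :
    dval m s = 2 * (flipCount m s : ℤ) - ((m : ℤ) - 1) + (-1)^(flipCount m s) := by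
  have hzz : ∀ j : ℕ, zsign (tfun s (j+1)) * zsign (tfun s j)
      = if tfun s (j+1) ≠ tfun s j then -1 else 1 := by
    intro j; cases h1 : tfun s (j+1) <;> cases h2 : tfun s j <;> simp [zsign]
  have hsum : (∑ j ∈ Finset.range (m-1), zsign (tfun s (j+1)) * zsign (tfun s j))
      = ((m - 1 : ℕ) : ℤ) - 2 * (flipCount m s : ℤ) := by
    rw [Finset.sum_congr rfl (fun j _ => hzz j)]
    have : ∀ j : ℕ, (if tfun s (j+1) ≠ tfun s j then (-1 : ℤ) else 1)
        = 1 - 2 * (if tfun s (j+1) ≠ tfun s j then (1:ℤ) else 0) := by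
      intro j; by_cases h : tfun s (j+1) ≠ tfun s j <;> simp [h]
    rw [Finset.sum_congr rfl (fun j _ => this j), Finset.sum_sub_distrib,
      Finset.sum_const, ← Finset.mul_sum, Finset.sum_boole]
    simp [flipCount]
  have hprod : zsign (tfun s (m-1)) * zsign (tfun s 0) = (-1)^(flipCount m s) := by
    rw [← telescope s (m-1)]
    rw [Finset.prod_congr rfl (fun j _ => hzz j), Finset.prod_ite, Finset.prod_const,
      Finset.prod_const_one, mul_one]
    rfl
  unfold dval
  rw [hsum, hprod]
  have : ((m - 1 : ℕ) : ℤ) = (m : ℤ) - 1 := by omega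
  rw [this]; ring

lemma dval_ground (m : ℕ) (hm : 2 ≤ m) (s : Fin m → Bool) (h : flipCount m s ≤ 1) :
    dval m s = -((m : ℤ) - 2) := by
  rw [dval_eq m hm]
  interval_cases h' : flipCount m s <;> norm_num <;> ring

lemma dval_excited (m : ℕ) (hm : 2 ≤ m) (s : Fin m → Bool) (h : 2 ≤ flipCount m s) :
    -((m : ℤ) - 2) + 4 ≤ dval m s := by
  rw [dval_eq m hm]
  rcases Nat.even_or_odd (flipCount m s) with he | ho
  · rw [he.neg_one_pow]
    have : 4 ≤ 2 * (flipCount m s : ℤ) := by omega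
    omega
  · rw [ho.neg_one_pow]
    have h3 : 3 ≤ flipCount m s := by
      rcases Nat.lt_or_ge (flipCount m s) 3 with h' | h'
      · exfalso
        have : flipCount m s = 2 := by omega
        rw [this] at ho
        exact (Nat.not_odd_iff_even.mpr (by decide)) ho
      · exact h'
    omega

lemma flip_le_one_of_ground (m : ℕ) (hm : 2 ≤ m) (s : Fin m → Bool)
    (h : dval m s = -((m : ℤ) - 2)) : flipCount m s ≤ 1 := by
  by_contra hk
  have := dval_excited m hm s (by omega)
  omega

lemma tfun_circ (n : ℕ) (j : Fin n) (p : ℕ) (hp : p < n/2) :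
    tfun (circUnaryWord n j) p =
      if (j : ℕ) < n/2 then decide (p < (j : ℕ)) else !(decide (p < (j : ℕ) - n/2)) := by
  simp [tfun, hp, circUnaryWord]

lemma flip_codeword (n : ℕ) (hn : 4 ≤ n) (j : Fin n) :
    flipCount (n/2) (circUnaryWord n j) ≤ 1 := by
  rw [flipCount, Finset.card_le_one]
  have key : ∀ a ∈ (Finset.range (n/2 - 1)).filter
      (fun p => tfun (circUnaryWord n j) (p+1) ≠ tfun (circUnaryWord n j) p),
      a + 1 = (if (j : ℕ) < n/2 then (j : ℕ) else (j : ℕ) - n/2) := by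
    intro a ha
    simp only [Finset.mem_filter, Finset.mem_range] at ha
    obtain ⟨ha1, ha2⟩ := ha
    rw [tfun_circ n j (a+1) (by omega), tfun_circ n j a (by omega)] at ha2
    by_cases hj : (j : ℕ) < n/2
    · simp only [if_pos hj] at ha2 ⊢
      simp only [ne_eq, decide_eq_decide] at ha2
      omega
    · simp only [if_neg hj] at ha2 ⊢
      have ha2' : decide (a+1 < (j:ℕ) - n/2) ≠ decide (a < (j:ℕ) - n/2) :=
        fun hh => ha2 (by rw [hh])
      simp only [ne_eq, decide_eq_decide] at ha2'
      omega
  intro a ha b hb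
  have := key a ha
  have := key b hb
  omega

lemma const_seg (t : ℕ → Bool) (a b : ℕ)
    (h : ∀ j, a ≤ j → j + 1 ≤ b → t (j+1) = t j) :
    ∀ i, a ≤ i → i ≤ b → t i = t a := by
  intro i
  induction i with
  | zero =>
    intro h1 _
    have : a = 0 := by omega
    rw [this]
  | succ k ih =>
    intro h1 h2
    rcases Nat.lt_or_ge a (k+1) with hlt | hge
    · have hak : a ≤ k := by omega
      rw [h k hak h2, ih hak (by omega)]
    · have : a = k + 1 := by omega
      rw [this]

lemma codeword_of_flip (n : ℕ) (hn : 4 ≤ n) (heven : Even n) (s : Fin (n/2) → Bool)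
    (h : flipCount (n/2) s ≤ 1) : ∃ j : Fin n, s = circUnaryWord n j := by
  have hm2 : 2 ≤ n/2 := by omega
  have hn2 : n = 2 * (n/2) := by
    obtain ⟨r, hr⟩ := heven; omega
  unfold flipCount at h
  rcases Nat.le_one_iff_eq_zero_or_eq_one.mp h with h0 | h1
  · -- no flips: constant string
    have hflt : ∀ j, j + 1 ≤ (n/2) - 1 → tfun s (j+1) = tfun s j := by
      intro j hj
      have : ((Finset.range ((n/2)-1)).filter
          (fun p => tfun s (p+1) ≠ tfun s p)) = ∅ := Finset.card_eq_zero.mp h0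
      by_contra hne
      have : j ∈ ((Finset.range ((n/2)-1)).filter
          (fun p => tfun s (p+1) ≠ tfun s p)) := by
        simp only [Finset.mem_filter, Finset.mem_range]
        exact ⟨by omega, hne⟩
      rw [Finset.card_eq_zero.mp h0] at this
      exact absurd this (Finset.notMem_empty j)
    have hconst : ∀ i, i ≤ (n/2) - 1 → tfun s i = tfun s 0 :=
      fun i hi => const_seg (tfun s) 0 ((n/2)-1) (fun j _ hj => hflt j hj) i (Nat.zero_le i) hi
    cases hs0 : tfun s 0 with
    | false =>
      refine ⟨⟨0, by omega⟩, ?_⟩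
      funext i
      have hiv : (i : ℕ) < (n/2) := i.isLt
      rw [tfun_val s i]
      simp only [circUnaryWord, Fin.val_mk]
      rw [if_pos (by omega : (0:ℕ) < n/2)]
      rw [hconst i (by omega), hs0]
      simp
    | true =>
      refine ⟨⟨(n/2), by omega⟩, ?_⟩
      funext i
      have hiv : (i : ℕ) < (n/2) := i.isLt
      rw [tfun_val s i]
      simp only [circUnaryWord, Fin.val_mk]
      rw [if_neg (by omega : ¬ ((n/2) < n/2))]
      rw [hconst i (by omega), hs0]
      simp [show (n/2) - n/2 = 0 from by omega]
  · -- exactly one flip at p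
    obtain ⟨p, hp⟩ := Finset.card_eq_one.mp h1
    have hpmem : p ∈ (Finset.range ((n/2)-1)).filter (fun q => tfun s (q+1) ≠ tfun s q) := by
      rw [hp]; exact Finset.mem_singleton_self p
    simp only [Finset.mem_filter, Finset.mem_range] at hpmem
    obtain ⟨hplt, hpflip⟩ := hpmem
    have hnoflip : ∀ j, j < (n/2) - 1 → j ≠ p → tfun s (j+1) = tfun s j := by
      intro j hj hjp
      by_contra hne
      have : j ∈ (Finset.range ((n/2)-1)).filter (fun q => tfun s (q+1) ≠ tfun s q) := by
        simp only [Finset.mem_filter, Finset.mem_range]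
        exact ⟨hj, hne⟩
      rw [hp, Finset.mem_singleton] at this
      exact hjp this
    have hlow : ∀ i, i ≤ p → tfun s i = tfun s 0 := by
      intro i hi
      exact const_seg (tfun s) 0 p
        (fun j _ hj => hnoflip j (by omega) (by omega)) i (Nat.zero_le i) hi
    have hhigh : ∀ i, p + 1 ≤ i → i ≤ (n/2) - 1 → tfun s i = tfun s (p+1) := by
      intro i hi1 hi2
      exact const_seg (tfun s) (p+1) ((n/2)-1)
        (fun j hj1 hj2 => hnoflip j (by omega) (by omega)) i hi1 hi2
    have hsp : tfun s p = tfun s 0 := hlow p le_rfl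
    cases hs0 : tfun s 0 with
    | true =>
      have hsp1 : tfun s (p+1) = false := by
        rw [hsp, hs0] at hpflip
        cases hv : tfun s (p+1)
        · rfl
        · rw [hv] at hpflip; exact absurd rfl hpflip
      refine ⟨⟨p + 1, by omega⟩, ?_⟩
      funext i
      have hiv : (i : ℕ) < (n/2) := i.isLt
      rw [tfun_val s i]
      simp only [circUnaryWord, Fin.val_mk]
      rw [if_pos (by omega : p + 1 < n/2)]
      rcases Nat.lt_or_ge (i : ℕ) (p+1) with hc | hc
      · rw [hlow i (by omega), hs0, decide_eq_true (by omega : (i:ℕ) < p + 1)]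
      · rw [hhigh i hc (by omega), hsp1]
        simp [show ¬ ((i:ℕ) < p + 1) from by omega]
    | false =>
      have hsp1 : tfun s (p+1) = true := by
        rw [hsp, hs0] at hpflip
        cases hv : tfun s (p+1)
        · rw [hv] at hpflip; exact absurd rfl hpflip
        · rfl
      refine ⟨⟨(n/2) + p + 1, by omega⟩, ?_⟩
      funext i
      have hiv : (i : ℕ) < (n/2) := i.isLt
      rw [tfun_val s i]
      simp only [circUnaryWord, Fin.val_mk]
      rw [if_neg (by omega : ¬ ((n/2) + p + 1 < n/2))]
      have hsub : (n/2) + p + 1 - n/2 = p + 1 := by omega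
      rw [hsub]
      rcases Nat.lt_or_ge (i : ℕ) (p+1) with hc | hc
      · rw [hlow i (by omega), hs0, decide_eq_true hc]
        simp
      · rw [hhigh i hc (by omega), hsp1]
        simp [show ¬ ((i:ℕ) < p + 1) from by omega]

lemma v_eq_sum {m : ℕ} (v : (Fin m → Bool) → ℂ) :
    v = ∑ w : Fin m → Bool, v w • basisVec w := by
  funext x
  rw [Finset.sum_apply]
  simp only [Pi.smul_apply, basisVec, smul_eq_mul, mul_ite, mul_one, mul_zero]
  rw [Finset.sum_ite_eq (Finset.univ : Finset (Fin m → Bool)) x v]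
  simp

/-- **Spectrum of the circulant unary penalty Hamiltonian.** For even `n ≥ 4`:
every circulant unary codeword state is an eigenvector with eigenvalue `-(n/2 - 2)`; every
eigenvalue is either `-(n/2 - 2)` or real and at least `-(n/2 - 2) + 4` (in particular
`-(n/2 - 2)` is the least eigenvalue); and the `-(n/2 - 2)`-eigenspace is exactly the span of
the circulant unary codeword states. -/
theorem circ_unary_penalty_spectrum (n : ℕ) (hn : 4 ≤ n) (heven : Even n) :
    (∀ j : Fin n,
        (circUnaryPen n hn).mulVec (basisVec (circUnaryWord n j)) =
          (-(((n / 2 : ℕ) : ℂ) - 2)) • basisVec (circUnaryWord n j)) ∧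
      (∀ μ : ℂ,
        (∃ v : (Fin (n / 2) → Bool) → ℂ, v ≠ 0 ∧ (circUnaryPen n hn).mulVec v = μ • v) →
          μ = -(((n / 2 : ℕ) : ℂ) - 2) ∨
            ∃ r : ℝ, μ = (r : ℂ) ∧ -(((n / 2 : ℕ) : ℝ) - 2) + 4 ≤ r) ∧
      {v : (Fin (n / 2) → Bool) → ℂ |
          (circUnaryPen n hn).mulVec v = (-(((n / 2 : ℕ) : ℂ) - 2)) • v} =
        (Submodule.span ℂ (Set.range fun j : Fin n => basisVec (circUnaryWord n j)) : Set _) := by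
  have hm2 : 2 ≤ n / 2 := by omega
  have hpen := pen_eq_diagonal n hn
  have hcastg : ∀ s : Fin (n/2) → Bool, flipCount (n/2) s ≤ 1 →
      ((dval (n/2) s : ℤ) : ℂ) = -(((n/2 : ℕ) : ℂ) - 2) := by
    intro s hs
    rw [dval_ground (n/2) hm2 s hs]
    norm_cast
  have key1 : ∀ j : Fin n,
      (circUnaryPen n hn).mulVec (basisVec (circUnaryWord n j)) =
        (-(((n / 2 : ℕ) : ℂ) - 2)) • basisVec (circUnaryWord n j) := by
    intro j
    rw [hpen]
    funext x
    rw [Matrix.mulVec_diagonal]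
    by_cases hx : x = circUnaryWord n j
    · subst hx
      simp only [basisVec, if_pos rfl, Pi.smul_apply, smul_eq_mul, mul_one]
      rw [hcastg _ (flip_codeword n hn j)]
    · simp [basisVec, hx]
  refine ⟨key1, ?_, ?_⟩
  · rintro μ ⟨v, hv0, hv⟩
    obtain ⟨x, hx⟩ : ∃ x, v x ≠ 0 := by
      by_contra hc; push_neg at hc; exact hv0 (funext hc)
    rw [hpen] at hv
    have hxx := congrFun hv x
    rw [Matrix.mulVec_diagonal] at hxx
    simp only [Pi.smul_apply, smul_eq_mul] at hxx
    have hmu : ((dval (n/2) x : ℤ) : ℂ) = μ := mul_right_cancel₀ hx hxx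
    by_cases hk : flipCount (n/2) x ≤ 1
    · left; rw [← hmu, hcastg x hk]
    · right
      refine ⟨((dval (n/2) x : ℤ) : ℝ), by rw [← hmu]; norm_cast, ?_⟩
      have hz := dval_excited (n/2) hm2 x (by omega)
      exact_mod_cast hz
  · ext v
    simp only [Set.mem_setOf_eq, SetLike.mem_coe]
    constructor
    · intro hv
      rw [hpen] at hv
      rw [v_eq_sum v]
      apply Submodule.sum_mem
      intro w _
      by_cases hw : v w = 0
      · rw [hw, zero_smul]; exact Submodule.zero_mem _
      · have hxx := congrFun hv w
        rw [Matrix.mulVec_diagonal] at hxx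
        simp only [Pi.smul_apply, smul_eq_mul] at hxx
        have hdw : ((dval (n/2) w : ℤ) : ℂ) = -(((n/2 : ℕ) : ℂ) - 2) :=
          mul_right_cancel₀ hw hxx
        have hdz : dval (n/2) w = -(((n/2 : ℕ) : ℤ) - 2) := by
          have h2 : ((dval (n/2) w : ℤ) : ℂ) = ((-(((n/2 : ℕ) : ℤ) - 2) : ℤ) : ℂ) := by
            rw [hdw]; norm_cast
          exact_mod_cast h2
        have hk := flip_le_one_of_ground (n/2) hm2 w hdz
        obtain ⟨j, hj⟩ := codeword_of_flip n hn heven w hk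
        exact Submodule.smul_mem _ _ (Submodule.subset_span ⟨j, by rw [hj]⟩)
    · intro hv
      induction hv using Submodule.span_induction with
      | mem x h =>
        obtain ⟨j, rfl⟩ := h
        exact key1 j
      | zero => simp [Matrix.mulVec_zero]
      | add x y _ _ ihx ihy => rw [Matrix.mulVec_add, ihx, ihy, smul_add]
      | smul a x _ ih => rw [Matrix.mulVec_smul, ih, smul_comm]
end
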